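/- Inclusion of Morrey spaces in Herz–Morrey spaces: for 1 ≤ q < ∞ and λ ≥ 0, every f ∈ L^{q,λ}(ℝ^n) belongs to MK̇^{0,λ/q}_{q,q}(ℝ^n) with ‖f‖_{MK̇^{0,λ/q}_{q,q}} ≤ C ‖f‖_{L^{q,λ}} (in particular L^{q,λ}(ℝ^n) ⊂ MK̇^{0,λ}_{q,q}(ℝ^n) with the paper's normalization of indices). -/

import Mathlib

open MeasureTheory ENNReal

noncomputable section

/-- Euclidean space ℝ^n. -/
abbrev E (n : ℕ) := EuclideanSpace ℝ (Fin n)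

/-- Operator norm of an n×n real matrix w.r.t. the Euclidean norm. -/
def opNorm {n : ℕ} (A : Matrix (Fin n) (Fin n) ℝ) : ℝ :=
  ‖Matrix.toEuclideanCLM (𝕜 := ℝ) A‖

/-- Action of a matrix on a vector in Euclidean space. -/
def mApp {n : ℕ} (A : Matrix (Fin n) (Fin n) ℝ) (x : E n) : E n :=
  Matrix.toEuclideanCLM (𝕜 := ℝ) A x

/-- The axis-parallel cube centered at `x₀` with side length `r`. -/
def cube {n : ℕ} (x₀ : E n) (r : ℝ) : Set (E n) :=
  {x | ∀ i, |x i - x₀ i| ≤ r / 2}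

/-- The Morrey norm `‖f‖_{L^{p,λ}}`, valued in `ℝ≥0∞`. -/
def morreyNorm {n : ℕ} (p lam : ℝ) (f : E n → ℝ) : ℝ≥0∞ :=
  ⨆ (x₀ : E n) (r : ℝ) (_ : 0 < r),
    (ENNReal.ofReal (r ^ (-lam)) * ∫⁻ x in cube x₀ r, ENNReal.ofReal (|f x| ^ p)) ^ (1 / p)
/-- The dyadic annulus `C_k = B_k \ B_{k-1}`. -/
def annulus (n : ℕ) (k : ℤ) : Set (E n) :=
  {x | (2 : ℝ) ^ (k - 1) ≤ ‖x‖ ∧ ‖x‖ < (2 : ℝ) ^ k}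

/-- The homogeneous Herz–Morrey norm `‖f‖_{MK̇^{α,λ}_{p,q}}`, valued in `ℝ≥0∞`. -/
def herzMorreyNorm {n : ℕ} (α lam p q : ℝ) (f : E n → ℝ) : ℝ≥0∞ :=
  ⨆ k₀ : ℤ, ENNReal.ofReal ((2 : ℝ) ^ (-(k₀ : ℝ) * lam)) *
    (∑' k : ℤ, if k ≤ k₀ then
        ENNReal.ofReal ((2 : ℝ) ^ ((k : ℝ) * α * p)) *
          (eLpNorm f (ENNReal.ofReal q) (volume.restrict (annulus n k))) ^ p
      else 0) ^ (1 / p)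

/-! The annuli `C_k`, `k ≤ k₀`, are disjoint and lie in the ball of radius `2 ^ k₀`, hence in the
cube of side `r = 2 ^ (k₀ + 1)` centred at the origin. So the Herz–Morrey sum up to `k₀` is at most
`∫_Q |f|^q ≤ r ^ λ ‖f‖_{L^{q,λ}} ^ q`, and the weight `2 ^ (-k₀ λ / q)` leaves the constant
`2 ^ (λ / q)`. -/

theorem tsum_indicator_setLIntegral_le {ι α : Type*} [Countable ι] [MeasurableSpace α]
    {μ : Measure α} {A : ι → Set α} (hA : ∀ i, MeasurableSet (A i))
    (hd : Pairwise (Function.onFun Disjoint A)) {I : Set ι} {S : Set α} (hS : ∀ i ∈ I, A i ⊆ S)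
    (g : α → ℝ≥0∞) :
    ∑' i, I.indicator (fun i => ∫⁻ x in A i, g x ∂μ) i ≤ ∫⁻ x in S, g x ∂μ := by
  calc ∑' i, I.indicator (fun i => ∫⁻ x in A i, g x ∂μ) i
      = ∫⁻ x in ⋃ i : I, A i, g x ∂μ := by
        rw [← tsum_subtype]
        exact (lintegral_iUnion (fun i : I => hA i)
          (fun i j hij => hd (Subtype.coe_ne_coe.mpr hij)) g).symm
    _ ≤ ∫⁻ x in S, g x ∂μ := lintegral_mono_set (Set.iUnion_subset fun i => hS i i.2)

theorem eLpNorm_ofReal_rpow {α : Type*} [MeasurableSpace α] {μ : Measure α} {q : ℝ} (hq : 0 < q)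
    (f : α → ℝ) :
    eLpNorm f (ENNReal.ofReal q) μ ^ q = ∫⁻ x, ENNReal.ofReal (|f x| ^ q) ∂μ := by
  rw [eLpNorm_eq_eLpNorm' (by simpa using hq) ofReal_ne_top, toReal_ofReal hq.le,
    ← lintegral_rpow_enorm_eq_rpow_eLpNorm' hq]
  simp_rw [Real.enorm_eq_ofReal_abs, ofReal_rpow_of_nonneg (abs_nonneg _) hq.le]

theorem ball_subset_cube {n : ℕ} (x₀ : E n) (r : ℝ) : Metric.ball x₀ r ⊆ cube x₀ (2 * r) :=
  fun x hx i => by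
    linarith [Real.dist_eq (x i) (x₀ i) ▸ PiLp.dist_apply_le x x₀ i, Metric.mem_ball.mp hx]

theorem measurableSet_annulus (n : ℕ) (k : ℤ) : MeasurableSet (annulus n k) :=
  measurableSet_Ico.preimage measurable_norm

theorem pairwise_disjoint_annulus (n : ℕ) : Pairwise (Function.onFun Disjoint (annulus n)) := by
  intro i j hij
  wlog h : i < j generalizing i j
  · exact (this hij.symm (lt_of_le_of_ne (not_lt.mp h) hij.symm)).symm
  refine Set.disjoint_left.mpr fun x hxi hxj => ?_
  have : (2 : ℝ) ^ i ≤ 2 ^ (j - 1) := zpow_le_zpow_right₀ one_le_two (by omega)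
  linarith [hxi.2, hxj.1]

theorem annulus_subset_ball {n : ℕ} {k k₀ : ℤ} (hk : k ≤ k₀) :
    annulus n k ⊆ Metric.ball 0 (2 ^ k₀) := fun x hx => by
  have : (2 : ℝ) ^ k ≤ 2 ^ k₀ := zpow_le_zpow_right₀ one_le_two hk
  simpa using hx.2.trans_le this

theorem setLIntegral_cube_le_morreyNorm {n : ℕ} {p : ℝ} (hp : 0 < p) (lam : ℝ) (f : E n → ℝ)
    (x₀ : E n) {r : ℝ} (hr : 0 < r) :
    ∫⁻ x in cube x₀ r, ENNReal.ofReal (|f x| ^ p) ≤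
      ENNReal.ofReal (r ^ lam) * morreyNorm p lam f ^ p := by
  have h : (ENNReal.ofReal (r ^ (-lam)) * ∫⁻ x in cube x₀ r, ENNReal.ofReal (|f x| ^ p)) ^ (1 / p)
      ≤ morreyNorm p lam f :=
    le_iSup_of_le x₀ (le_iSup_of_le r (le_iSup_of_le hr le_rfl))
  rw [one_div, rpow_inv_le_iff hp] at h
  calc ∫⁻ x in cube x₀ r, ENNReal.ofReal (|f x| ^ p)
      = ENNReal.ofReal (r ^ lam) *
          (ENNReal.ofReal (r ^ (-lam)) * ∫⁻ x in cube x₀ r, ENNReal.ofReal (|f x| ^ p)) := by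
        rw [← mul_assoc, ← ofReal_mul (by positivity), ← Real.rpow_add hr, add_neg_cancel,
          Real.rpow_zero, ofReal_one, one_mul]
    _ ≤ _ := by gcongr

theorem herzMorreyNorm_zero_le_morreyNorm {n : ℕ} {q : ℝ} (hq : 0 < q) (lam : ℝ) (f : E n → ℝ) :
    herzMorreyNorm 0 (lam / q) q q f ≤ ENNReal.ofReal (2 ^ (lam / q)) * morreyNorm q lam f := by
  refine iSup_le fun k₀ => ?_
  have hr₂ : (2 : ℝ) * 2 ^ k₀ = 2 ^ ((k₀ : ℝ) + 1) := by
    rw [Real.rpow_add two_pos, Real.rpow_one, Real.rpow_intCast, mul_comm]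
  set r : ℝ := 2 ^ ((k₀ : ℝ) + 1)
  have hr : 0 < r := by positivity
  have hsum : (∑' k : ℤ, if k ≤ k₀ then
        ENNReal.ofReal ((2 : ℝ) ^ ((k : ℝ) * 0 * q)) *
          (eLpNorm f (ENNReal.ofReal q) (volume.restrict (annulus n k))) ^ q
      else 0) ≤ ENNReal.ofReal (r ^ lam) * morreyNorm q lam f ^ q := by
    have hcube : ∀ k ∈ Set.Iic k₀, annulus n k ⊆ cube 0 r := fun k hk =>
      hr₂ ▸ (annulus_subset_ball hk).trans (ball_subset_cube 0 _)
    refine le_trans (le_of_eq (tsum_congr fun k => ?_))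
      ((tsum_indicator_setLIntegral_le (measurableSet_annulus n) (pairwise_disjoint_annulus n)
        hcube _).trans (setLIntegral_cube_le_morreyNorm hq lam f 0 hr))
    by_cases hk : k ≤ k₀
    · simp [hk, eLpNorm_ofReal_rpow hq]
    · simp [hk]
  calc _ ≤ ENNReal.ofReal (2 ^ (-(k₀ : ℝ) * (lam / q))) *
        (ENNReal.ofReal (r ^ lam) * morreyNorm q lam f ^ q) ^ (1 / q) := by gcongr
    _ = ENNReal.ofReal (2 ^ (lam / q)) * morreyNorm q lam f := by
      rw [ENNReal.mul_rpow_of_nonneg _ _ (by positivity), ← ENNReal.rpow_mul,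
        mul_one_div_cancel hq.ne', rpow_one, ofReal_rpow_of_nonneg (by positivity) (by positivity),
        ← mul_assoc, ← ofReal_mul (by positivity), ← Real.rpow_mul hr.le,
        ← Real.rpow_mul two_pos.le, ← Real.rpow_add two_pos]
      congr 3
      ring

theorem stmt_14_general (n : ℕ) (q lam : ℝ) (hq : 1 ≤ q) :
    ∃ C > 0, ∀ f : E n → ℝ, morreyNorm q lam f < ⊤ →
      herzMorreyNorm 0 (lam / q) q q f ≤ ENNReal.ofReal C * morreyNorm q lam f :=
  ⟨2 ^ (lam / q), by positivity, fun f _ =>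
    herzMorreyNorm_zero_le_morreyNorm (zero_lt_one.trans_le hq) lam f⟩

theorem stmt_14 (n : ℕ) (q lam : ℝ) (hq : 1 ≤ q) (hlam : 0 ≤ lam) :
    ∃ C > 0, ∀ f : E n → ℝ, morreyNorm q lam f < ⊤ →
      herzMorreyNorm 0 (lam / q) q q f ≤ ENNReal.ofReal C * morreyNorm q lam f :=
  stmt_14_general n q lam hq
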